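/- arXiv:2410.06832 — 3 statements merged into one kernel-verified Lean document; each statement's English description precedes it below -/
import Mathlib

section
/- Positive definiteness of the subspace distance: for κ-orthonormal m×r matrices T₁ and T₂, one has ‖T₁ᵀ K T₂‖_F² = r (equivalently Dist_κ(T₁,T₂) = 0) if and only if the column span of T₁ equals the column span of T₂ as subspaces of ℝ^m. -/
open Matrix

/-- Frobenius norm of a real matrix. -/
noncomputable def frobNorm {α β : Type*} [Fintype α] [Fintype β] (M : Matrix α β ℝ) : ℝ :=
  Real.sqrt (∑ i, ∑ j, (M i j) ^ 2)

/-- Subspace distance between two κ-orthonormal bases. -/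
noncomputable def distK {m r : ℕ} (κ : Fin m → ℝ) (T₁ T₂ : Matrix (Fin m) (Fin r) ℝ) : ℝ :=
  Real.sqrt ((r : ℝ) - (frobNorm (T₁ᵀ * Matrix.diagonal κ * T₂)) ^ 2)

/-!
Write `C = T₁ᵀ K T₂`. Since `T₁ C` is the `K`-orthogonal projection of `T₂` onto the column
span of `T₁`, Pythagoras gives `‖C‖_F² + tr((T₂ - T₁ C)ᵀ K (T₂ - T₁ C)) = r`. Hence
`‖C‖_F² ≤ r`, with equality iff `T₂ = T₁ C` (as `K` is positive definite), i.e. iff the columns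
of `T₂` lie in the span of `T₁`. Since `‖Cᵀ‖_F = ‖C‖_F`, the same equality gives the reverse
inclusion.
-/

lemma frobNorm_sq {α β : Type*} [Fintype α] [Fintype β] (M : Matrix α β ℝ) :
    frobNorm M ^ 2 = (Mᵀ * M).trace := by
  rw [frobNorm, Real.sq_sqrt (by positivity), Finset.sum_comm]
  simp [trace, mul_apply, sq]

lemma frobNorm_transpose {α β : Type*} [Fintype α] [Fintype β] (M : Matrix α β ℝ) :
    frobNorm Mᵀ = frobNorm M := by
  rw [frobNorm, frobNorm, Finset.sum_comm]
  rfl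

section Gram

variable {n p : Type*} [Fintype n] {K : Matrix n n ℝ} {A B : Matrix n p ℝ}

lemma transpose_transpose_mul_mul_of_isSymm (hK : K.IsSymm) :
    (Aᵀ * K * B)ᵀ = Bᵀ * K * A := by
  rw [transpose_mul, transpose_mul, transpose_transpose, hK.eq, Matrix.mul_assoc]

variable [Fintype p]

lemma Matrix.PosSemidef.transpose_mul_mul_same (hK : K.PosSemidef) (M : Matrix n p ℝ) :
    (Mᵀ * K * M).PosSemidef := by
  simpa only [conjTranspose_eq_transpose_of_trivial] using hK.conjTranspose_mul_mul_same M

lemma Matrix.PosDef.trace_transpose_mul_mul_self_eq_zero_iff (hK : K.PosDef)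
    {M : Matrix n p ℝ} : (Mᵀ * K * M).trace = 0 ↔ M = 0 := by
  rw [(hK.posSemidef.transpose_mul_mul_same M).trace_eq_zero_iff]
  refine ⟨fun h => ext_iff_mulVec.2 fun v => ?_, fun h => by simp [h]⟩
  by_contra hv
  rw [zero_mulVec] at hv
  have hquad : star (M *ᵥ v) ⬝ᵥ K *ᵥ (M *ᵥ v) = v ⬝ᵥ (Mᵀ * K * M) *ᵥ v := by
    rw [star_trivial, ← mulVec_mulVec, ← mulVec_mulVec, dotProduct_mulVec v Mᵀ, vecMul_transpose]
  exact (hK.dotProduct_mulVec_pos hv).ne' (by rw [hquad, h, zero_mulVec, dotProduct_zero])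

variable [DecidableEq p]

lemma transpose_mul_mul_sub_mul_gram (hK : K.IsSymm) (hA : Aᵀ * K * A = 1)
    (hB : Bᵀ * K * B = 1) :
    (B - A * (Aᵀ * K * B))ᵀ * K * (B - A * (Aᵀ * K * B)) =
      1 - (Aᵀ * K * B)ᵀ * (Aᵀ * K * B) := by
  set C := Aᵀ * K * B
  have hC : Bᵀ * K * A = Cᵀ := (transpose_transpose_mul_mul_of_isSymm hK).symm
  simp only [transpose_sub, transpose_mul, Matrix.sub_mul, Matrix.mul_sub, ← Matrix.mul_assoc,
    hB, hC]
  simp only [Matrix.mul_assoc, hA, Matrix.one_mul]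
  rw [← Matrix.mul_assoc Aᵀ K B]
  abel

lemma trace_transpose_mul_mul_sub_mul_gram (hK : K.IsSymm) (hA : Aᵀ * K * A = 1)
    (hB : Bᵀ * K * B = 1) :
    ((B - A * (Aᵀ * K * B))ᵀ * K * (B - A * (Aᵀ * K * B))).trace =
      Fintype.card p - frobNorm (Aᵀ * K * B) ^ 2 := by
  rw [transpose_mul_mul_sub_mul_gram hK hA hB, trace_sub, trace_one, frobNorm_sq]

lemma frobNorm_gram_sq_le_card (hK : K.PosDef) (hA : Aᵀ * K * A = 1) (hB : Bᵀ * K * B = 1) :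
    frobNorm (Aᵀ * K * B) ^ 2 ≤ Fintype.card p := by
  have hK' := isHermitian_iff_isSymm.1 hK.isHermitian
  have := (hK.posSemidef.transpose_mul_mul_same (B - A * (Aᵀ * K * B))).trace_nonneg
  rw [trace_transpose_mul_mul_sub_mul_gram hK' hA hB] at this
  linarith

lemma frobNorm_gram_sq_eq_card_iff (hK : K.PosDef) (hA : Aᵀ * K * A = 1)
    (hB : Bᵀ * K * B = 1) :
    frobNorm (Aᵀ * K * B) ^ 2 = Fintype.card p ↔ A * (Aᵀ * K * B) = B := by
  have hK' := isHermitian_iff_isSymm.1 hK.isHermitian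
  rw [eq_comm (b := B), ← sub_eq_zero (a := B), ← hK.trace_transpose_mul_mul_self_eq_zero_iff,
    trace_transpose_mul_mul_sub_mul_gram hK' hA hB, sub_eq_zero, eq_comm]

lemma mul_gram_eq_self_iff_range_le (hA : Aᵀ * K * A = 1) :
    A * (Aᵀ * K * B) = B ↔ LinearMap.range B.mulVecLin ≤ LinearMap.range A.mulVecLin := by
  refine ⟨fun h => ?_, fun h => ext_iff_mulVec.2 fun v => ?_⟩
  · rw [← h, mulVecLin_mul]
    exact LinearMap.range_comp_le_range _ _
  · obtain ⟨w, hw⟩ := h (LinearMap.mem_range_self B.mulVecLin v)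
    replace hw : A *ᵥ w = B *ᵥ v := hw
    calc (A * (Aᵀ * K * B)) *ᵥ v = A *ᵥ ((Aᵀ * K) *ᵥ (B *ᵥ v)) := by
          simp only [mulVec_mulVec, Matrix.mul_assoc]
      _ = A *ᵥ ((Aᵀ * K * A) *ᵥ w) := by
          rw [← hw, mulVec_mulVec w (Aᵀ * K)]
      _ = B *ᵥ v := by rw [hA, one_mulVec, hw]

lemma frobNorm_gram_sq_eq_card_iff_range_le (hK : K.PosDef) (hA : Aᵀ * K * A = 1)
    (hB : Bᵀ * K * B = 1) :
    frobNorm (Aᵀ * K * B) ^ 2 = Fintype.card p ↔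
      LinearMap.range B.mulVecLin ≤ LinearMap.range A.mulVecLin :=
  (frobNorm_gram_sq_eq_card_iff hK hA hB).trans (mul_gram_eq_self_iff_range_le hA)

end Gram

theorem dist_eq_zero_iff_span_eq_general (m r : ℕ)
    (κ : Fin m → ℝ) (hκ : ∀ i, 0 < κ i)
    (T₁ T₂ : Matrix (Fin m) (Fin r) ℝ)
    (hT₁ : T₁ᵀ * Matrix.diagonal κ * T₁ = 1)
    (hT₂ : T₂ᵀ * Matrix.diagonal κ * T₂ = 1) :
    ((frobNorm (T₁ᵀ * Matrix.diagonal κ * T₂)) ^ 2 = (r : ℝ) ↔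
      LinearMap.range T₁.mulVecLin = LinearMap.range T₂.mulVecLin) ∧
    (distK κ T₁ T₂ = 0 ↔
      LinearMap.range T₁.mulVecLin = LinearMap.range T₂.mulVecLin) := by
  have hK : (diagonal κ).PosDef := .diagonal hκ
  have hswap : frobNorm (T₂ᵀ * diagonal κ * T₁) = frobNorm (T₁ᵀ * diagonal κ * T₂) := by
    rw [← transpose_transpose_mul_mul_of_isSymm (isSymm_diagonal κ), frobNorm_transpose]
  have hle := frobNorm_gram_sq_le_card hK hT₁ hT₂
  have h₂₁ := frobNorm_gram_sq_eq_card_iff_range_le hK hT₁ hT₂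
  have h₁₂ := frobNorm_gram_sq_eq_card_iff_range_le hK hT₂ hT₁
  rw [hswap] at h₁₂
  simp only [Fintype.card_fin] at hle h₂₁ h₁₂
  have hspan : frobNorm (T₁ᵀ * diagonal κ * T₂) ^ 2 = r ↔
      LinearMap.range T₁.mulVecLin = LinearMap.range T₂.mulVecLin :=
    ⟨fun h => le_antisymm (h₁₂.1 h) (h₂₁.1 h), fun h => h₂₁.2 h.ge⟩
  refine ⟨hspan, ?_⟩
  rw [← hspan, distK, Real.sqrt_eq_zero', sub_nonpos]
  exact ⟨fun h => le_antisymm hle h, ge_of_eq⟩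

/-- Positive definiteness of the subspace distance. -/
theorem dist_eq_zero_iff_span_eq (m r : ℕ) (hm : 0 < m) (hr : 0 < r)
    (κ : Fin m → ℝ) (hκ : ∀ i, 0 < κ i)
    (T₁ T₂ : Matrix (Fin m) (Fin r) ℝ)
    (hT₁ : T₁ᵀ * Matrix.diagonal κ * T₁ = 1)
    (hT₂ : T₂ᵀ * Matrix.diagonal κ * T₂ = 1) :
    ((frobNorm (T₁ᵀ * Matrix.diagonal κ * T₂)) ^ 2 = (r : ℝ) ↔
      LinearMap.range T₁.mulVecLin = LinearMap.range T₂.mulVecLin) ∧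
    (distK κ T₁ T₂ = 0 ↔
      LinearMap.range T₁.mulVecLin = LinearMap.range T₂.mulVecLin) :=
  dist_eq_zero_iff_span_eq_general m r κ hκ T₁ T₂ hT₁ hT₂
end

section
/- Triangle inequality for the subspace distance: for any κ-orthonormal m×r matrices T₁, T₂, T₃, one has Dist_κ(T₁,T₂) + Dist_κ(T₂,T₃) ≥ Dist_κ(T₁,T₃), i.e. (r − ‖T₁ᵀ K T₂‖_F²)^{1/2} + (r − ‖T₂ᵀ K T₃‖_F²)^{1/2} ≥ (r − ‖T₁ᵀ K T₃‖_F²)^{1/2}. -/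
open Matrix

/-!
Substituting `U = K^{1/2} T` turns κ-orthonormal matrices into orthonormal ones, and for
orthonormal `U, V` with `r` columns the projections `U Uᵀ`, `V Vᵀ` satisfy
`‖U Uᵀ - V Vᵀ‖_F² = 2 (r - ‖Uᵀ V‖_F²)`. Hence `Dist_κ(T₁, T₂) = ‖U₁ U₁ᵀ - U₂ U₂ᵀ‖_F / √2`, and the
triangle inequality is that of the Frobenius norm.
-/

attribute [local instance] Matrix.frobeniusNormedAddCommGroup

section Frobenius

variable {m n : Type*} [Fintype m] [Fintype n]

lemma frobNorm_eq_norm (M : Matrix m n ℝ) : frobNorm M = ‖M‖ := by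
  rw [frobenius_norm_def, frobNorm, Real.sqrt_eq_rpow]
  congr 1
  refine Finset.sum_congr rfl fun i _ => Finset.sum_congr rfl fun j _ => ?_
  rw [Real.norm_eq_abs, Real.rpow_two, sq_abs]

lemma frobNorm_sq_eq_trace (M : Matrix m n ℝ) : frobNorm M ^ 2 = trace (Mᵀ * M) := by
  rw [frobNorm, Real.sq_sqrt (by positivity), trace, Finset.sum_comm]
  simp only [diag_apply, mul_apply, transpose_apply, sq]

lemma trace_mul_transpose_mul_mul_transpose (A B : Matrix m n ℝ) :
    trace (A * Aᵀ * (B * Bᵀ)) = frobNorm (Aᵀ * B) ^ 2 := by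
  rw [frobNorm_sq_eq_trace, transpose_mul, transpose_transpose, ← Matrix.mul_assoc,
    trace_mul_comm]
  simp only [Matrix.mul_assoc]

variable [DecidableEq n]

lemma norm_sub_mul_transpose_sq {U V : Matrix m n ℝ} (hU : Uᵀ * U = 1) (hV : Vᵀ * V = 1) :
    ‖U * Uᵀ - V * Vᵀ‖ ^ 2 = 2 * (Fintype.card n - frobNorm (Uᵀ * V) ^ 2) := by
  have hsymm : (U * Uᵀ - V * Vᵀ)ᵀ = U * Uᵀ - V * Vᵀ := by
    simp only [transpose_sub, transpose_mul, transpose_transpose]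
  have hidem {W : Matrix m n ℝ} (hW : Wᵀ * W = 1) :
      trace (W * Wᵀ * (W * Wᵀ)) = Fintype.card n := by
    rw [trace_mul_transpose_mul_mul_transpose, hW, frobNorm_sq_eq_trace, transpose_one,
      Matrix.one_mul, trace_one]
  have hcomm : trace (V * Vᵀ * (U * Uᵀ)) = trace (U * Uᵀ * (V * Vᵀ)) := trace_mul_comm _ _
  rw [← frobNorm_eq_norm, frobNorm_sq_eq_trace, hsymm, Matrix.sub_mul, Matrix.mul_sub,
    Matrix.mul_sub, trace_sub, trace_sub, trace_sub, hidem hU, hidem hV, hcomm,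
    trace_mul_transpose_mul_mul_transpose]
  ring

lemma sqrt_card_sub_frobNorm_sq {U V : Matrix m n ℝ} (hU : Uᵀ * U = 1) (hV : Vᵀ * V = 1) :
    Real.sqrt (Fintype.card n - frobNorm (Uᵀ * V) ^ 2) = ‖U * Uᵀ - V * Vᵀ‖ / Real.sqrt 2 := by
  rw [eq_div_iff (by positivity), ← Real.sqrt_mul_self (norm_nonneg _), ← sq,
    norm_sub_mul_transpose_sq hU hV, ← Real.sqrt_mul' _ zero_le_two, mul_comm]

end Frobenius

section Weighted

variable {m n : Type*} [Fintype m] [DecidableEq m]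

noncomputable def whiten (κ : m → ℝ) (T : Matrix m n ℝ) : Matrix m n ℝ :=
  diagonal (fun i => Real.sqrt (κ i)) * T

lemma whiten_transpose_mul_whiten {κ : m → ℝ} (hκ : ∀ i, 0 ≤ κ i) (A B : Matrix m n ℝ) :
    (whiten κ A)ᵀ * whiten κ B = Aᵀ * diagonal κ * B := by
  have hsq : diagonal (fun i => Real.sqrt (κ i)) * diagonal (fun i => Real.sqrt (κ i)) =
      diagonal κ := by
    rw [diagonal_mul_diagonal]
    exact congrArg diagonal (funext fun i => Real.mul_self_sqrt (hκ i))
  rw [whiten, whiten, transpose_mul, diagonal_transpose, Matrix.mul_assoc,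
    ← Matrix.mul_assoc (diagonal _), hsq, Matrix.mul_assoc]

end Weighted

lemma distK_eq_norm_sub {m r : ℕ} {κ : Fin m → ℝ} (hκ : ∀ i, 0 ≤ κ i)
    {T T' : Matrix (Fin m) (Fin r) ℝ} (hT : Tᵀ * diagonal κ * T = 1)
    (hT' : T'ᵀ * diagonal κ * T' = 1) :
    distK κ T T' =
      ‖whiten κ T * (whiten κ T)ᵀ - whiten κ T' * (whiten κ T')ᵀ‖ / Real.sqrt 2 := by
  rw [← whiten_transpose_mul_whiten hκ] at hT hT'
  rw [distK, ← whiten_transpose_mul_whiten hκ, ← sqrt_card_sub_frobNorm_sq hT hT',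
    Fintype.card_fin]

theorem distK_triangle_general (m r : ℕ)
    (κ : Fin m → ℝ) (hκ : ∀ i, 0 < κ i)
    (T₁ T₂ T₃ : Matrix (Fin m) (Fin r) ℝ)
    (hT₁ : T₁ᵀ * Matrix.diagonal κ * T₁ = 1)
    (hT₂ : T₂ᵀ * Matrix.diagonal κ * T₂ = 1)
    (hT₃ : T₃ᵀ * Matrix.diagonal κ * T₃ = 1) :
    distK κ T₁ T₃ ≤ distK κ T₁ T₂ + distK κ T₂ T₃ := by
  have hκ' : ∀ i, 0 ≤ κ i := fun i => (hκ i).le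
  rw [distK_eq_norm_sub hκ' hT₁ hT₃, distK_eq_norm_sub hκ' hT₁ hT₂,
    distK_eq_norm_sub hκ' hT₂ hT₃, ← add_div]
  gcongr
  exact norm_sub_le_norm_sub_add_norm_sub _ _ _

/-- Triangle inequality for the subspace distance. -/
theorem distK_triangle (m r : ℕ) (hm : 0 < m) (hr : 0 < r)
    (κ : Fin m → ℝ) (hκ : ∀ i, 0 < κ i)
    (T₁ T₂ T₃ : Matrix (Fin m) (Fin r) ℝ)
    (hT₁ : T₁ᵀ * Matrix.diagonal κ * T₁ = 1)
    (hT₂ : T₂ᵀ * Matrix.diagonal κ * T₂ = 1)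
    (hT₃ : T₃ᵀ * Matrix.diagonal κ * T₃ = 1) :
    distK κ T₁ T₃ ≤ distK κ T₁ T₂ + distK κ T₂ T₃ :=
  distK_triangle_general m r κ hκ T₁ T₂ T₃ hT₁ hT₂ hT₃
end

section
/- Subspace approximation bound: let T₁ and T₂ be κ-orthonormal m×r matrices. For every vector v in the column span of T₂ with vᵀ K v ≤ 1, the κ-orthogonal projection Πv = T₁ T₁ᵀ K v of v onto the column span of T₁ satisfies (v − Πv)ᵀ K (v − Πv) ≤ r − ‖T₁ᵀ K T₂‖_F², i.e. the squared κ-weighted distance from v to the column span of T₁ is at most Dist_κ(T₁,T₂)². -/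
open Matrix

/-- Quadratic form transfer along a matrix. -/
theorem quadForm_eq_aux {m r : ℕ} (A : Matrix (Fin m) (Fin r) ℝ)
    (M : Matrix (Fin m) (Fin m) ℝ) (x : Fin r → ℝ) :
    (A *ᵥ x) ⬝ᵥ (M *ᵥ (A *ᵥ x)) = x ⬝ᵥ ((Aᵀ * M * A) *ᵥ x) := by
  rw [dotProduct_mulVec, ← vecMul_transpose, vecMul_vecMul, vecMul_transpose,
    dotProduct_mulVec, vecMul_vecMul, ← dotProduct_mulVec]

/-- Key matrix identity: the Gram matrix of the residual basis. -/
theorem key_id_aux {m r : ℕ} (κ : Fin m → ℝ)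
    (T₁ T₂ : Matrix (Fin m) (Fin r) ℝ)
    (hT₁ : T₁ᵀ * Matrix.diagonal κ * T₁ = 1)
    (hT₂ : T₂ᵀ * Matrix.diagonal κ * T₂ = 1) :
    (T₂ - T₁ * (T₁ᵀ * Matrix.diagonal κ * T₂))ᵀ * Matrix.diagonal κ *
      (T₂ - T₁ * (T₁ᵀ * Matrix.diagonal κ * T₂)) =
    1 - (T₁ᵀ * Matrix.diagonal κ * T₂)ᵀ * (T₁ᵀ * Matrix.diagonal κ * T₂) := by
  set D := Matrix.diagonal κ with hD
  set B := T₁ᵀ * D * T₂ with hB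
  have hBt : T₂ᵀ * D * T₁ = Bᵀ := by
    rw [hB, Matrix.transpose_mul, Matrix.transpose_mul, Matrix.transpose_transpose,
      Matrix.diagonal_transpose, Matrix.mul_assoc]
  rw [Matrix.transpose_sub, Matrix.transpose_mul, Matrix.sub_mul, Matrix.sub_mul,
    Matrix.mul_sub, Matrix.mul_sub]
  have e1 : T₂ᵀ * D * T₂ = 1 := hT₂
  have e2 : T₂ᵀ * D * (T₁ * B) = Bᵀ * B := by rw [← Matrix.mul_assoc, hBt]
  have e3 : Bᵀ * T₁ᵀ * D * T₂ = Bᵀ * B := by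
    rw [Matrix.mul_assoc, Matrix.mul_assoc, ← Matrix.mul_assoc T₁ᵀ, ← hB]
  have e4 : Bᵀ * T₁ᵀ * D * (T₁ * B) = Bᵀ * B := by
    rw [Matrix.mul_assoc (Bᵀ * T₁ᵀ), ← Matrix.mul_assoc, Matrix.mul_assoc Bᵀ T₁ᵀ D,
      Matrix.mul_assoc Bᵀ, ← Matrix.mul_assoc (T₁ᵀ * D), hT₁, Matrix.one_mul]
  rw [e1, e2, e3, e4]
  simp

/-- Weighted trace of a sandwiched diagonal form. -/
theorem trace_diag_aux {m r : ℕ} (κ : Fin m → ℝ) (G : Matrix (Fin m) (Fin r) ℝ) :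
    Matrix.trace (Gᵀ * Matrix.diagonal κ * G) = ∑ i, κ i * ∑ j, (G i j)^2 := by
  rw [Matrix.mul_assoc]
  simp only [Matrix.trace, Matrix.diag, Matrix.mul_apply, Matrix.transpose_apply,
    Matrix.diagonal_apply, ite_mul, zero_mul, Finset.sum_ite_eq, Finset.mem_univ, if_true, sq]
  rw [Finset.sum_comm]
  congr 1; ext i; rw [Finset.mul_sum]; congr 1; ext j; ring

/-- Subspace approximation bound for the κ-orthogonal projection. -/
theorem proj_residual_le_dist_sq (m r : ℕ) (hm : 0 < m) (hr : 0 < r)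
    (κ : Fin m → ℝ) (hκ : ∀ i, 0 < κ i)
    (T₁ T₂ : Matrix (Fin m) (Fin r) ℝ)
    (hT₁ : T₁ᵀ * Matrix.diagonal κ * T₁ = 1)
    (hT₂ : T₂ᵀ * Matrix.diagonal κ * T₂ = 1)
    (v : Fin m → ℝ) (hv : v ∈ LinearMap.range T₂.mulVecLin)
    (hvnorm : v ⬝ᵥ (Matrix.diagonal κ *ᵥ v) ≤ 1)
    (Pv : Fin m → ℝ) (hPv : Pv = T₁ *ᵥ (T₁ᵀ *ᵥ (Matrix.diagonal κ *ᵥ v))) :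
    (v - Pv) ⬝ᵥ (Matrix.diagonal κ *ᵥ (v - Pv)) ≤
      (r : ℝ) - (frobNorm (T₁ᵀ * Matrix.diagonal κ * T₂)) ^ 2 := by
  obtain ⟨c, hc⟩ := hv
  rw [Matrix.mulVecLin_apply] at hc
  set D := Matrix.diagonal κ with hD
  set B := T₁ᵀ * D * T₂ with hB
  -- c has norm at most 1
  have hcn : ∑ j, (c j)^2 ≤ 1 := by
    rw [← hc, quadForm_eq_aux, hT₂, Matrix.one_mulVec] at hvnorm
    simpa [dotProduct, sq] using hvnorm
  -- residual vector
  set G := T₂ - T₁ * B with hG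
  have hres : v - Pv = G *ᵥ c := by
    rw [hPv, ← hc, Matrix.mulVec_mulVec, Matrix.mulVec_mulVec, Matrix.mulVec_mulVec,
      hG, Matrix.sub_mulVec, Matrix.mul_assoc (T₁*T₁ᵀ), Matrix.mul_assoc T₁, hB,
      Matrix.mul_assoc T₁ᵀ]
  -- LHS as a weighted sum
  have hLHS : (v - Pv) ⬝ᵥ (D *ᵥ (v - Pv)) = ∑ i, κ i * ((G *ᵥ c) i)^2 := by
    rw [hres, hD]
    simp only [dotProduct, Matrix.mulVec_diagonal, sq]
    congr 1; ext i; ring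
  -- RHS equals the trace of GᵀDG
  have hfrob : (frobNorm B) ^ 2 = ∑ i, ∑ j, (B i j)^2 :=
    Real.sq_sqrt (Finset.sum_nonneg fun i _ => Finset.sum_nonneg fun j _ => sq_nonneg _)
  have htrB : Matrix.trace (Bᵀ * B) = ∑ i, ∑ j, (B i j)^2 := by
    simp only [Matrix.trace, Matrix.diag, Matrix.mul_apply, Matrix.transpose_apply, sq]
    exact Finset.sum_comm
  have hRHS : (r : ℝ) - (frobNorm B) ^ 2 = ∑ i, κ i * ∑ j, (G i j)^2 := by
    rw [← trace_diag_aux κ G, hG, hB, key_id_aux κ T₁ T₂ hT₁ hT₂]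
    rw [Matrix.trace_sub, Matrix.trace_one, htrB, hfrob]
    simp
  rw [hLHS, hRHS]
  -- final inequality via Cauchy–Schwarz
  apply Finset.sum_le_sum
  intro i _
  have hcs : ((G *ᵥ c) i)^2 ≤ (∑ j, (G i j)^2) * ∑ j, (c j)^2 := by
    simpa [Matrix.mulVec, dotProduct] using
      Finset.sum_mul_sq_le_sq_mul_sq Finset.univ (fun j => G i j) c
  have h1 : ((G *ᵥ c) i)^2 ≤ ∑ j, (G i j)^2 := by
    calc ((G *ᵥ c) i)^2 ≤ (∑ j, (G i j)^2) * ∑ j, (c j)^2 := hcs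
      _ ≤ (∑ j, (G i j)^2) * 1 := by
          apply mul_le_mul_of_nonneg_left hcn
          exact Finset.sum_nonneg fun j _ => sq_nonneg _
      _ = ∑ j, (G i j)^2 := mul_one _
  exact mul_le_mul_of_nonneg_left h1 (hκ i).le
end
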